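/- Let G = (V,E) be a finite simple graph containing no cycle of length 4, no cycle of length 5, and no cycle of length 6 (as subgraphs, not necessarily induced), and let w : V → ℝ be a weight function such that G is w-well-covered. Let v ∈ V \ L(G), and suppose there exists a vertex u ∈ N[v] such that D(u) ≠ ∅. Then for every maximal independent set M of the subgraph of G induced by D(v), w(v) = w(M) (in particular, if D(v) = ∅, then w(v) = 0). -/

import Mathlib

namespace WC

variable {V : Type*}

/-- A set of vertices is independent if its elements are pairwise nonadjacent. -/
def IsIndep (G : SimpleGraph V) (S : Set V) : Prop :=
  S.Pairwise fun a b => ¬ G.Adj a b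

/-- A maximal independent set: independent and not properly contained in another
independent set. -/
def IsMaxIndep (G : SimpleGraph V) (S : Set V) : Prop :=
  IsIndep G S ∧ ∀ T : Set V, IsIndep G T → S ⊆ T → T = S

/-- A maximal independent set of the subgraph of `G` induced by `A`
(equivalently, a subset of `A`, independent in `G`, maximal among such). -/
def IsMaxIndepOn (G : SimpleGraph V) (A S : Set V) : Prop :=
  S ⊆ A ∧ IsIndep G S ∧ ∀ T : Set V, T ⊆ A → IsIndep G T → S ⊆ T → T = S

/-- The weight of a set of vertices: `w(S) = Σ_{s ∈ S} w(s)`. -/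
noncomputable def wsum (w : V → ℝ) (S : Set V) : ℝ := ∑ᶠ x ∈ S, w x

/-- `G` is `w`-well-covered if all maximal independent sets have the same weight. -/
def WWC (G : SimpleGraph V) (w : V → ℝ) : Prop :=
  ∀ S T : Set V, IsMaxIndep G S → IsMaxIndep G T → wsum w S = wsum w T

/-- `G` is well-covered if all maximal independent sets have the same cardinality. -/
def WellCovered (G : SimpleGraph V) : Prop :=
  ∀ S T : Set V, IsMaxIndep G S → IsMaxIndep G T → S.ncard = T.ncard

/-- `N(S)`, the set of vertices at distance exactly 1 from `S`. -/
def nbhd (G : SimpleGraph V) (S : Set V) : Set V :=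
  {x | x ∉ S ∧ ∃ s ∈ S, G.Adj x s}

/-- `N[S]`, the set of vertices at distance at most 1 from `S`. -/
def cnbhd (G : SimpleGraph V) (S : Set V) : Set V :=
  S ∪ {x | ∃ s ∈ S, G.Adj x s}

/-- `N₂(S)`, the set of vertices at distance exactly 2 from `S`. -/
def n2 (G : SimpleGraph V) (S : Set V) : Set V :=
  {x | x ∉ cnbhd G S ∧ ∃ y ∈ nbhd G S, G.Adj x y}

/-- `S` dominates `T` if `T ⊆ N[S]`. -/
def Dominates (G : SimpleGraph V) (S T : Set V) : Prop := T ⊆ cnbhd G S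

/-- `D(v) = N(v) \ N(N₂(v))`. -/
def dSet (G : SimpleGraph V) (v : V) : Set V :=
  G.neighborSet v \ nbhd G (n2 G {v})

/-- `L(G)`: vertices of degree 1, or of degree 2 lying on a triangle. -/
def lSet (G : SimpleGraph V) : Set V :=
  {v | (G.neighborSet v).ncard = 1 ∨
    ((G.neighborSet v).ncard = 2 ∧ ∃ a b, G.Adj v a ∧ G.Adj v b ∧ G.Adj a b)}

/-- `G` contains a cycle of length `k` as a (not necessarily induced) subgraph. -/
def HasCycleLen (G : SimpleGraph V) (k : ℕ) : Prop :=
  ∃ (u : V) (p : G.Walk u u), p.IsCycle ∧ p.length = k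

/-- A vertex is simplicial if its closed neighborhood induces a complete subgraph. -/
def Simplicial (G : SimpleGraph V) (v : V) : Prop :=
  ∀ a ∈ G.neighborSet v, ∀ b ∈ G.neighborSet v, a ≠ b → G.Adj a b

/-- `B` is an induced complete bipartite subgraph of `G` on (nonempty, disjoint)
parts `BX` and `BY`. -/
def IsCompleteBipartiteOn (G : SimpleGraph V) (BX BY : Set V) : Prop :=
  BX.Nonempty ∧ BY.Nonempty ∧ Disjoint BX BY ∧ IsIndep G BX ∧ IsIndep G BY ∧
    ∀ x ∈ BX, ∀ y ∈ BY, G.Adj x y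

/-- `B` (on parts `BX`, `BY`) is a generating subgraph of `G`: there is an
independent set `S` (a witness) such that `S ∪ BX` and `S ∪ BY` are both
maximal independent sets of `G`. -/
def IsGenerating (G : SimpleGraph V) (BX BY : Set V) : Prop :=
  ∃ S : Set V, IsIndep G S ∧ IsMaxIndep G (S ∪ BX) ∧ IsMaxIndep G (S ∪ BY)

/-- The edge `xy` is relating: there is an independent set `S` such that
`S ∪ {x}` and `S ∪ {y}` are both maximal independent sets of `G`. -/
def IsRelating (G : SimpleGraph V) (x y : V) : Prop :=
  G.Adj x y ∧ ∃ S : Set V, IsIndep G S ∧ IsMaxIndep G (S ∪ {x}) ∧ IsMaxIndep G (S ∪ {y})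

end WC

/-!
Everything rests on one exchange argument. Fix a region `C` (here `N[v]`, or `N[v] ∪ N[u]` for
an edge `uv`) and an independent set `Y` outside `C`, and extend `Y` to a maximal independent set
`S` of `G - C`. If an independent `A ⊆ C` has no neighbours outside `C` and dominates `C` together
with `Y`, then `S ∪ A` is a maximal independent set of `G`; so two such sets `A`, `B` have equal
weight. Comparing `{v}` with `M` gives `w(v) = w(M)` when `D(v) ≠ ∅`. When `D(v) = ∅`,
comparing `{u}` with `{v} ∪ M'`, for `M'` maximal independent in `D(u)`, gives
`w(u) = w(v) + w(M') = w(v) + w(u)`; here `v ∉ L(G)` and the absence of `C₄` keep `v` out of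
`M'` and away from it.

The set `Y` is built by choosing, for each neighbour `x` of `v` outside `D(v)` (and likewise
for `u`), a neighbour of `x` at distance 2 from `v`: excluding `C₅` and `C₆` makes the chosen
vertices pairwise nonadjacent, and excluding `C₄` keeps them outside `C`.
-/

namespace WC

open SimpleGraph

variable {V : Type*} {G : SimpleGraph V}

lemma hasCycleLen_four {a b c d : V} (hab : G.Adj a b) (hbc : G.Adj b c) (hcd : G.Adj c d)
    (hda : G.Adj d a) (hac : a ≠ c) (hbd : b ≠ d) : HasCycleLen G 4 := by
  refine ⟨a, .cons hab (.cons hbc (.cons hcd (.cons hda .nil))), ?_, rfl⟩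
  have := hab.ne; have := hbc.ne; have := hcd.ne; have := hda.ne
  simp [Walk.cons_isCycle_iff, Walk.isPath_def]
  aesop

lemma hasCycleLen_five {a b c d e : V} (hab : G.Adj a b) (hbc : G.Adj b c) (hcd : G.Adj c d)
    (hde : G.Adj d e) (hea : G.Adj e a)
    (hac : a ≠ c) (had : a ≠ d) (hbd : b ≠ d) (hbe : b ≠ e) (hce : c ≠ e) :
    HasCycleLen G 5 := by
  refine ⟨a, .cons hab (.cons hbc (.cons hcd (.cons hde (.cons hea .nil)))), ?_, rfl⟩
  have := hab.ne; have := hbc.ne; have := hcd.ne; have := hde.ne; have := hea.ne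
  simp [Walk.cons_isCycle_iff, Walk.isPath_def]
  aesop

lemma hasCycleLen_six {a b c d e f : V} (hab : G.Adj a b) (hbc : G.Adj b c) (hcd : G.Adj c d)
    (hde : G.Adj d e) (hef : G.Adj e f) (hfa : G.Adj f a)
    (hac : a ≠ c) (had : a ≠ d) (hae : a ≠ e) (hbd : b ≠ d) (hbe : b ≠ e)
    (hbf : b ≠ f) (hce : c ≠ e) (hcf : c ≠ f) (hdf : d ≠ f) : HasCycleLen G 6 := by
  refine ⟨a, .cons hab (.cons hbc (.cons hcd (.cons hde (.cons hef (.cons hfa .nil))))),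
    ?_, rfl⟩
  have := hab.ne; have := hbc.ne; have := hcd.ne; have := hde.ne; have := hef.ne
  have := hfa.ne
  simp [Walk.cons_isCycle_iff, Walk.isPath_def]
  aesop

@[simp] lemma mem_nbhd_singleton {v x : V} : x ∈ nbhd G {v} ↔ G.Adj x v := by
  simp only [nbhd, Set.mem_ofPred_eq, Set.mem_singleton_iff, exists_eq_left]
  exact ⟨And.right, fun h => ⟨h.ne, h⟩⟩

@[simp] lemma mem_cnbhd_singleton {v x : V} : x ∈ cnbhd G {v} ↔ x = v ∨ G.Adj x v := by
  simp [cnbhd]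

lemma mem_n2_singleton {v x : V} :
    x ∈ n2 G {v} ↔ x ≠ v ∧ ¬ G.Adj x v ∧ ∃ y, G.Adj y v ∧ G.Adj x y := by
  simp [n2, and_assoc]

lemma mem_dSet {v m : V} : m ∈ dSet G v ↔ G.Adj v m ∧ ∀ z ∈ n2 G {v}, ¬ G.Adj m z := by
  have hm : G.Adj v m → m ∉ n2 G {v} := fun h hm => (mem_n2_singleton.mp hm).2.1 h.symm
  simp only [dSet, nbhd, Set.mem_sdiff, mem_neighborSet, Set.mem_ofPred_eq, not_and, not_exists]
  exact ⟨fun h => ⟨h.1, h.2 (hm h.1)⟩, fun h => ⟨h.1, fun _ => h.2⟩⟩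

lemma neighborSet_subset_cnbhd_of_mem_dSet {v m : V} (hm : m ∈ dSet G v) :
    G.neighborSet m ⊆ cnbhd G {v} := by
  intro x hmx
  by_contra hx
  simp only [mem_cnbhd_singleton, not_or] at hx
  have hvm := (mem_dSet.mp hm).1
  exact (mem_dSet.mp hm).2 x (mem_n2_singleton.mpr ⟨hx.1, hx.2, m, hvm.symm, hmx.symm⟩) hmx

lemma exists_adj_mem_n2_of_notMem_dSet {v x : V} (hvx : G.Adj v x) (hx : x ∉ dSet G v) :
    ∃ y ∈ n2 G {v}, G.Adj x y := by
  simpa [mem_dSet, hvx] using hx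

lemma IsIndep.insert {S : Set V} {a : V} (hS : IsIndep G S) (h : ∀ s ∈ S, ¬ G.Adj a s) :
    IsIndep G (insert a S) :=
  Set.Pairwise.insert hS fun b hb _ => ⟨h b hb, fun hba => h b hb hba.symm⟩

lemma IsIndep.union {S T : Set V} (hS : IsIndep G S) (hT : IsIndep G T)
    (h : ∀ s ∈ S, ∀ t ∈ T, ¬ G.Adj s t) : IsIndep G (S ∪ T) :=
  Set.pairwise_union.mpr
    ⟨hS, hT, fun s hs t ht _ => ⟨h s hs t ht, fun hts => h s hs t ht hts.symm⟩⟩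

lemma exists_isMaxIndepOn_superset [Finite V] {A T : Set V} (hTA : T ⊆ A) (hT : IsIndep G T) :
    ∃ S, T ⊆ S ∧ IsMaxIndepOn G A S := by
  obtain ⟨S, ⟨hTS, hSA, hS⟩, hmax⟩ := Set.Finite.exists_maximalFor Set.ncard
    {S | T ⊆ S ∧ S ⊆ A ∧ IsIndep G S} (Set.toFinite _) ⟨T, le_rfl, hTA, hT⟩
  refine ⟨S, hTS, hSA, hS, fun U hUA hU hSU => ?_⟩
  have hle : S.ncard ≤ U.ncard := Set.ncard_le_ncard hSU (Set.toFinite U)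
  exact (Set.eq_of_subset_of_ncard_le hSU (hmax ⟨hTS.trans hSU, hUA, hU⟩ hle)
    (Set.toFinite U)).symm

lemma IsMaxIndepOn.exists_adj {A S : Set V} (hS : IsMaxIndepOn G A S) {a : V} (ha : a ∈ A)
    (haS : a ∉ S) : ∃ s ∈ S, G.Adj a s := by
  by_contra! h
  have := hS.2.2 (insert a S) (Set.insert_subset ha hS.1) (hS.2.1.insert h) (Set.subset_insert a S)
  exact haS (this ▸ Set.mem_insert a S)

lemma IsMaxIndepOn.nonempty {A S : Set V} (hS : IsMaxIndepOn G A S) (hA : A.Nonempty) :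
    S.Nonempty := by
  obtain ⟨a, ha⟩ := hA
  by_cases haS : a ∈ S
  · exact ⟨a, haS⟩
  · obtain ⟨s, hs, -⟩ := hS.exists_adj ha haS
    exact ⟨s, hs⟩

structure IsSealedIn (G : SimpleGraph V) (C Y A : Set V) : Prop where
  subset : A ⊆ C
  indep : IsIndep G A
  neighborSet_subset : ∀ a ∈ A, G.neighborSet a ⊆ C
  dominates : ∀ x ∈ C, x ∉ A → ∃ y ∈ Y ∪ A, G.Adj x y

lemma IsSealedIn.isMaxIndep_union {C Y A S : Set V} (hA : IsSealedIn G C Y A)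
    (hS : IsMaxIndepOn G Cᶜ S) (hYS : Y ⊆ S) : IsMaxIndep G (S ∪ A) := by
  refine ⟨hS.2.1.union hA.indep fun s hs a ha hsa =>
      hS.1 hs (hA.neighborSet_subset a ha hsa.symm),
    fun T hT hST => (Set.Subset.antisymm ?_ hST)⟩
  intro t ht
  by_contra htSA
  rcases em (t ∈ C) with htC | htC
  · obtain ⟨y, hy, hty⟩ := hA.dominates t htC fun h => htSA (Or.inr h)
    exact hT ht (hST (Set.union_subset_union_left A hYS hy)) hty.ne hty
  · obtain ⟨s, hs, hts⟩ := hS.exists_adj htC fun h => htSA (Or.inl h)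
    exact hT ht (hST (Or.inl hs)) hts.ne hts

lemma wsum_union [Finite V] (w : V → ℝ) {S T : Set V} (h : Disjoint S T) :
    wsum w (S ∪ T) = wsum w S + wsum w T :=
  finsum_mem_union h (Set.toFinite S) (Set.toFinite T)

lemma wsum_singleton (w : V → ℝ) (a : V) : wsum w {a} = w a := finsum_mem_singleton

lemma wsum_insert [Finite V] (w : V → ℝ) {S : Set V} {a : V} (h : a ∉ S) :
    wsum w (insert a S) = w a + wsum w S :=
  finsum_mem_insert w h (Set.toFinite S)

lemma WWC.wsum_eq_of_isSealedIn [Finite V] {w : V → ℝ} (hw : WWC G w) {C Y A B : Set V}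
    (hYC : Y ⊆ Cᶜ) (hY : IsIndep G Y) (hA : IsSealedIn G C Y A) (hB : IsSealedIn G C Y B) :
    wsum w A = wsum w B := by
  obtain ⟨S, hYS, hS⟩ := exists_isMaxIndepOn_superset hYC hY
  have hdisj : ∀ {A}, A ⊆ C → Disjoint S A := fun hAC =>
    Set.disjoint_left.mpr fun _ hs ha => hS.1 hs (hAC ha)
  have := hw _ _ (hA.isMaxIndep_union hS hYS) (hB.isMaxIndep_union hS hYS)
  rw [wsum_union w (hdisj hA.subset), wsum_union w (hdisj hB.subset)] at this
  linarith

lemma isIndep_image_of_mem_n2 (h5 : ¬ HasCycleLen G 5) {a : V} {X : Set V} {f : V → V}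
    (hX : ∀ x ∈ X, G.Adj a x ∧ f x ∈ n2 G {a} ∧ G.Adj x (f x)) : IsIndep G (f '' X) := by
  rintro _ ⟨x, hx, rfl⟩ _ ⟨x', hx', rfl⟩ hne hadj
  obtain ⟨hax, hy, hxy⟩ := hX x hx
  obtain ⟨hax', hy', hxy'⟩ := hX x' hx'
  rw [mem_n2_singleton] at hy hy'
  exact h5 (hasCycleLen_five hax hxy hadj hxy'.symm hax'.symm (Ne.symm hy.1) (Ne.symm hy'.1)
    (fun h => hy'.2.1 (h ▸ hax.symm)) (fun h => hne (h ▸ rfl))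
    (fun h => hy.2.1 (h ▸ hax'.symm)))

lemma not_adj_of_adj_of_notMem_cnbhd (h6 : ¬ HasCycleLen G 6) {a b x y x' y' : V}
    (hab : G.Adj a b) (hax : G.Adj a x) (hxb : x ∉ cnbhd G {b}) (hxy : G.Adj x y)
    (hy : y ∉ cnbhd G {a} ∪ cnbhd G {b}) (hbx' : G.Adj b x') (hx'a : x' ∉ cnbhd G {a})
    (hx'y' : G.Adj x' y') (hy' : y' ∉ cnbhd G {a} ∪ cnbhd G {b}) : ¬ G.Adj y y' := by
  intro hyy'
  simp only [Set.mem_union, mem_cnbhd_singleton, not_or] at hxb hy hx'a hy'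
  exact h6 (hasCycleLen_six hax hxy hyy' hx'y'.symm hbx'.symm hab.symm (Ne.symm hy.1.1)
    (Ne.symm hy'.1.1) (Ne.symm hx'a.1) (fun h => hy'.1.2 (h ▸ hax.symm))
    (fun h => hxb.2 (h ▸ hbx'.symm)) hxb.1 (fun h => hy.2.2 (h ▸ hbx'.symm)) hy.2.1 hy'.2.1)

lemma exists_adj_mem_n2_notMem_cnbhd (h4 : ¬ HasCycleLen G 4) {a b x : V} (hab : G.Adj a b)
    (hax : G.Adj a x) (hxb : x ∉ cnbhd G {b}) (hx : x ∉ dSet G a) :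
    ∃ y ∈ n2 G {a}, G.Adj x y ∧ y ∉ cnbhd G {b} := by
  obtain ⟨y, hy, hxy⟩ := exists_adj_mem_n2_of_notMem_dSet hax hx
  refine ⟨y, hy, hxy, ?_⟩
  rw [mem_n2_singleton] at hy
  rw [mem_cnbhd_singleton, not_or] at hxb ⊢
  exact ⟨fun h => hy.2.1 (h ▸ hab.symm),
    fun hyb => h4 (hasCycleLen_four hax hxy hyb hab.symm (Ne.symm hy.1) hxb.1)⟩

lemma mem_dSet_of_adj_of_mem_dSet (h4 : ¬ HasCycleLen G 4) {u v m : V} (huv : G.Adj u v)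
    (hm : m ∈ dSet G u) (hmv : G.Adj m v) : m ∈ dSet G v := by
  rw [mem_dSet] at hm ⊢
  refine ⟨hmv.symm, fun z hz hmz => ?_⟩
  rw [mem_n2_singleton] at hz
  have hzu : ¬ G.Adj z u := fun hzu =>
    h4 (hasCycleLen_four huv.symm hzu.symm hmz.symm hmv (Ne.symm hz.1) hm.1.ne)
  have hzu' : z ≠ u := fun h => hz.2.1 (h ▸ huv)
  exact hm.2 z (mem_n2_singleton.mpr ⟨hzu', hzu, m, hm.1.symm, hmz.symm⟩) hmz

lemma mem_lSet_of_neighborSet_subset (h4 : ¬ HasCycleLen G 4) {u v : V} (hvu : G.Adj v u)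
    (h : G.neighborSet v ⊆ cnbhd G {u}) : v ∈ lSet G := by
  have hN : ∀ x, G.Adj v x → x = u ∨ G.Adj x u := fun x hx => mem_cnbhd_singleton.mp (h hx)
  by_cases hex : ∃ x, G.Adj v x ∧ x ≠ u
  · obtain ⟨x, hvx, hxu⟩ := hex
    have hxu' : G.Adj x u := (hN x hvx).resolve_left hxu
    have hpair : G.neighborSet v = {u, x} := by
      ext y
      simp only [mem_neighborSet, Set.mem_insert_iff, Set.mem_singleton_iff]
      refine ⟨fun hvy => (hN y hvy).imp_right fun hyu => ?_,
        by rintro (rfl | rfl) <;> assumption⟩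
      by_contra hyx
      exact h4 (hasCycleLen_four hvy hyu hxu'.symm hvx.symm hvu.ne hyx)
    exact Or.inr ⟨by rw [hpair, Set.ncard_pair (Ne.symm hxu)], u, x, hvu, hvx, hxu'.symm⟩
  · push Not at hex
    have hsingle : G.neighborSet v = {u} := Set.ext fun y => ⟨hex y, fun h => h ▸ hvu⟩
    exact Or.inl (by rw [hsingle, Set.ncard_singleton])

lemma exists_isIndep_dominating (h5 : ¬ HasCycleLen G 5) (a : V) :
    ∃ Y ⊆ (cnbhd G {a})ᶜ, IsIndep G Y ∧
      ∀ x, G.Adj a x → x ∉ dSet G a → ∃ y ∈ Y, G.Adj x y := by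
  set X := {x | G.Adj a x ∧ x ∉ dSet G a}
  choose! f hf hxf using fun x (hx : x ∈ X) => exists_adj_mem_n2_of_notMem_dSet hx.1 hx.2
  refine ⟨f '' X, ?_, isIndep_image_of_mem_n2 h5 fun x hx => ⟨hx.1, hf x hx, hxf x hx⟩,
    fun x hax hx => ⟨f x, ⟨x, ⟨hax, hx⟩, rfl⟩, hxf x ⟨hax, hx⟩⟩⟩
  rintro _ ⟨x, hx, rfl⟩
  exact (hf x hx).1

lemma exists_isIndep_dominating_of_adj (h4 : ¬ HasCycleLen G 4) (h5 : ¬ HasCycleLen G 5)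
    (h6 : ¬ HasCycleLen G 6) {a b : V} (hab : G.Adj a b) :
    ∃ Y ⊆ (cnbhd G {a} ∪ cnbhd G {b})ᶜ, IsIndep G Y ∧
      (∀ x, G.Adj a x → x ∉ cnbhd G {b} → x ∉ dSet G a → ∃ y ∈ Y, G.Adj x y) ∧
      (∀ x, G.Adj b x → x ∉ cnbhd G {a} → x ∉ dSet G b → ∃ y ∈ Y, G.Adj x y) := by
  set X := {x | G.Adj a x ∧ x ∉ cnbhd G {b} ∧ x ∉ dSet G a}
  set X' := {x | G.Adj b x ∧ x ∉ cnbhd G {a} ∧ x ∉ dSet G b}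
  choose! f hf hxf hfb using fun x (hx : x ∈ X) =>
    exists_adj_mem_n2_notMem_cnbhd h4 hab hx.1 hx.2.1 hx.2.2
  choose! g hg hxg hga using fun x (hx : x ∈ X') =>
    exists_adj_mem_n2_notMem_cnbhd h4 hab.symm hx.1 hx.2.1 hx.2.2
  have hfC : ∀ x ∈ X, f x ∉ cnbhd G {a} ∪ cnbhd G {b} := fun x hx h =>
    h.elim (hf x hx).1 (hfb x hx)
  have hgC : ∀ x ∈ X', g x ∉ cnbhd G {a} ∪ cnbhd G {b} := fun x hx h =>
    h.elim (hga x hx) (hg x hx).1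
  refine ⟨f '' X ∪ g '' X', ?_, ?_,
    fun x hax hxb hx => ⟨f x, Or.inl ⟨x, ⟨hax, hxb, hx⟩, rfl⟩, hxf x ⟨hax, hxb, hx⟩⟩,
    fun x hbx hxa hx => ⟨g x, Or.inr ⟨x, ⟨hbx, hxa, hx⟩, rfl⟩, hxg x ⟨hbx, hxa, hx⟩⟩⟩
  · rintro _ (⟨x, hx, rfl⟩ | ⟨x, hx, rfl⟩)
    exacts [hfC x hx, hgC x hx]
  · refine (isIndep_image_of_mem_n2 h5 fun x hx => ⟨hx.1, hf x hx, hxf x hx⟩).union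
      (isIndep_image_of_mem_n2 h5 fun x hx => ⟨hx.1, hg x hx, hxg x hx⟩) ?_
    rintro _ ⟨x, hx, rfl⟩ _ ⟨x', hx', rfl⟩
    exact not_adj_of_adj_of_notMem_cnbhd h6 hab hx.1 hx.2.1 (hxf x hx) (hfC x hx) hx'.1 hx'.2.1
      (hxg x' hx') (hgC x' hx')

lemma isSealedIn_singleton {C Y : Set V} {v : V} (hvC : cnbhd G {v} ⊆ C)
    (hdom : ∀ x ∈ C, x ≠ v → ∃ y ∈ Y ∪ {v}, G.Adj x y) : IsSealedIn G C Y {v} where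
  subset := by simpa using hvC (Set.mem_union_left _ rfl)
  indep := Set.pairwise_singleton v _
  neighborSet_subset := by
    rintro _ rfl x hvx
    exact hvC (mem_cnbhd_singleton.mpr (Or.inr hvx.symm))
  dominates := hdom

theorem weight_eq_wsum_of_isMaxIndepOn_dSet [Finite V] (h5 : ¬ HasCycleLen G 5) {w : V → ℝ}
    (hw : WWC G w) {v : V} {M : Set V} (hM : IsMaxIndepOn G (dSet G v) M) (hMne : M.Nonempty) :
    w v = wsum w M := by
  obtain ⟨Y, hYC, hY, hYdom⟩ := exists_isIndep_dominating h5 v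
  have hMv : ∀ m ∈ M, G.Adj v m := fun m hm => (mem_dSet.mp (hM.1 hm)).1
  have hv : IsSealedIn G (cnbhd G {v}) Y {v} :=
    isSealedIn_singleton subset_rfl fun x hx hxv =>
      ⟨v, Or.inr rfl, (mem_cnbhd_singleton.mp hx).resolve_left hxv⟩
  have hM' : IsSealedIn G (cnbhd G {v}) Y M :=
    { subset := fun m hm => mem_cnbhd_singleton.mpr (Or.inr (hMv m hm).symm)
      indep := hM.2.1
      neighborSet_subset := fun m hm => neighborSet_subset_cnbhd_of_mem_dSet (hM.1 hm)
      dominates := by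
        intro x hx hxM
        rcases mem_cnbhd_singleton.mp hx with rfl | hxv
        · obtain ⟨m, hm⟩ := hMne
          exact ⟨m, Or.inr hm, hMv m hm⟩
        by_cases hxD : x ∈ dSet G v
        · obtain ⟨m, hm, hxm⟩ := hM.exists_adj hxD hxM
          exact ⟨m, Or.inr hm, hxm⟩
        · obtain ⟨y, hy, hxy⟩ := hYdom x hxv.symm hxD
          exact ⟨y, Or.inl hy, hxy⟩ }
  simpa [wsum_singleton] using hw.wsum_eq_of_isSealedIn hYC hY hv hM'

lemma isSealedIn_insert_of_isMaxIndepOn_dSet {Y M : Set V} {u v : V} (hvu : G.Adj v u)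
    (hM : IsMaxIndepOn G (dSet G u) M) (hMv : ∀ m ∈ M, ¬ G.Adj v m)
    (hYu : ∀ x, G.Adj u x → x ∉ cnbhd G {v} → x ∉ dSet G u → ∃ y ∈ Y, G.Adj x y) :
    IsSealedIn G (cnbhd G {v} ∪ cnbhd G {u}) Y (insert v M) :=
  { subset := Set.insert_subset (by simp) fun m hm =>
      Or.inr (mem_cnbhd_singleton.mpr (Or.inr (mem_dSet.mp (hM.1 hm)).1.symm))
    indep := hM.2.1.insert hMv
    neighborSet_subset := by
      rintro a (rfl | ha) x hax
      · exact Or.inl (mem_cnbhd_singleton.mpr (Or.inr hax.symm))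
      · exact Or.inr (neighborSet_subset_cnbhd_of_mem_dSet (hM.1 ha) hax)
    dominates := by
      intro x hx hxvM
      by_cases hxcv : x ∈ cnbhd G {v}
      · have hxv : x ≠ v := fun h => hxvM (h ▸ Set.mem_insert v M)
        exact ⟨v, Or.inr (Set.mem_insert v M), (mem_cnbhd_singleton.mp hxcv).resolve_left hxv⟩
      rcases mem_cnbhd_singleton.mp (hx.resolve_left hxcv) with rfl | hxu
      · exact ⟨v, Or.inr (Set.mem_insert v M), hvu.symm⟩
      by_cases hxD : x ∈ dSet G u
      · obtain ⟨m, hm, hxm⟩ := hM.exists_adj hxD fun h => hxvM (Set.mem_insert_of_mem v h)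
        exact ⟨m, Or.inr (Set.mem_insert_of_mem v hm), hxm⟩
      · obtain ⟨y, hy, hxy⟩ := hYu x hxu.symm hxcv hxD
        exact ⟨y, Or.inl hy, hxy⟩ }

theorem weight_eq_zero_of_dSet_eq_empty [Finite V] (h4 : ¬ HasCycleLen G 4)
    (h5 : ¬ HasCycleLen G 5) (h6 : ¬ HasCycleLen G 6) {w : V → ℝ} (hw : WWC G w) {u v : V}
    (hv : v ∉ lSet G) (hDv : dSet G v = ∅) (hvu : G.Adj v u) (hDu : (dSet G u).Nonempty) :
    w v = 0 := by
  obtain ⟨M, -, hM⟩ :=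
    exists_isMaxIndepOn_superset (Set.empty_subset (dSet G u)) (Set.pairwise_empty _)
  have hwu : w u = wsum w M := weight_eq_wsum_of_isMaxIndepOn_dSet h5 hw hM (hM.nonempty hDu)
  have hvM : v ∉ M := fun h =>
    hv (mem_lSet_of_neighborSet_subset h4 hvu (neighborSet_subset_cnbhd_of_mem_dSet (hM.1 h)))
  have hMv : ∀ m ∈ M, ¬ G.Adj v m := fun m hm hvm => by
    simpa [hDv] using mem_dSet_of_adj_of_mem_dSet h4 hvu.symm (hM.1 hm) hvm.symm
  obtain ⟨Y, hYC, hY, hYv, hYu⟩ := exists_isIndep_dominating_of_adj h4 h5 h6 hvu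
  have hu : IsSealedIn G (cnbhd G {v} ∪ cnbhd G {u}) Y {u} := by
    refine isSealedIn_singleton Set.subset_union_right fun x hx hxu => ?_
    by_cases hxcu : x ∈ cnbhd G {u}
    · exact ⟨u, Or.inr rfl, (mem_cnbhd_singleton.mp hxcu).resolve_left hxu⟩
    rcases mem_cnbhd_singleton.mp (hx.resolve_right hxcu) with rfl | hxv
    · exact ⟨u, Or.inr rfl, hvu⟩
    · obtain ⟨y, hy, hxy⟩ := hYv x hxv.symm hxcu (by simp [hDv])
      exact ⟨y, Or.inl hy, hxy⟩
  have := hw.wsum_eq_of_isSealedIn hYC hY hu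
    (isSealedIn_insert_of_isMaxIndepOn_dSet hvu hM hMv hYu)
  rw [wsum_singleton, wsum_insert w hvM] at this
  linarith

end WC

open WC

/-- in a `w`-well-covered graph with no `C₄`, `C₅`, `C₆`, if
`v ∉ L(G)` and some `u ∈ N[v]` has `D(u) ≠ ∅`, then `w(v) = w(M)` for every
maximal independent set `M` of the subgraph induced by `D(v)`; in particular,
if `D(v) = ∅` then `w(v) = 0`. -/
theorem stmt_11 {V : Type*} [Fintype V] (G : SimpleGraph V)
    (h4 : ¬ HasCycleLen G 4) (h5 : ¬ HasCycleLen G 5) (h6 : ¬ HasCycleLen G 6)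
    (w : V → ℝ) (hw : WWC G w)
    (v : V) (hv : v ∉ lSet G)
    (hu : ∃ u ∈ cnbhd G {v}, (dSet G u).Nonempty) :
    (∀ M : Set V, IsMaxIndepOn G (dSet G v) M → w v = wsum w M) ∧
    (dSet G v = ∅ → w v = 0) := by
  have hzero : dSet G v = ∅ → w v = 0 := by
    intro hDv
    obtain ⟨u, hvu, hDu⟩ := hu
    rcases mem_cnbhd_singleton.mp hvu with rfl | huv
    · simp [hDv] at hDu
    · exact weight_eq_zero_of_dSet_eq_empty h4 h5 h6 hw hv hDv huv.symm hDu
  refine ⟨fun M hM => ?_, hzero⟩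
  rcases (dSet G v).eq_empty_or_nonempty with hDv | hDv
  · have hM0 : M = ∅ := Set.subset_empty_iff.mp (hDv ▸ hM.1)
    rw [hM0, wsum, finsum_mem_empty, hzero hDv]
  · exact weight_eq_wsum_of_isMaxIndepOn_dSet h5 hw hM (hM.nonempty hDv)
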